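/- (Proposition 2, adversarial Z loss value.) Let μ be a Borel probability measure on ℝ^{d_Z}, let G : ℝ^{d_Z} → ℝ^{d_X} and E : ℝ^{d_X} → ℝ^{d_Z} be Borel measurable, let P = P_{Z,G(Z)} be the pushforward of μ under z ↦ (G(z), z) and Q = P_{E(G(Z)),G(Z)} the pushforward of μ under z ↦ (G(z), E(G(z))). Let D* = dP/d(P+Q). Then the loss at the optimal discriminator satisfies C(E,G) := ∫ (−log D*) dP + ∫ (−log(1−D*)) dQ = log 4 − 2 · D_JS(P‖Q), where D_JS(P‖Q) = (1/2) KL(P‖M) + (1/2) KL(Q‖M) with M = (1/2)(P + Q). -/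

import Mathlib

open MeasureTheory ENNReal

/-- `-log x` for `x ∈ [0,1] ⊆ ℝ≥0∞`, valued in `[0, ∞]`, with the convention
`log 0 = -∞`, i.e. `-log 0 = ∞`. -/
noncomputable def negLog (x : ℝ≥0∞) : ℝ≥0∞ :=
  if x = 0 then ∞ else ENNReal.ofReal (-Real.log x.toReal)

/-- Kullback–Leibler divergence `KL(P‖M) = ∫ log (dP/dM) dP` (here `P ≪ M` and the
divergence is finite, so a real-valued Bochner integral suffices). -/
noncomputable def klReal {Ω : Type*} [MeasurableSpace Ω] (P M : Measure Ω) : ℝ :=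
  ∫ x, Real.log ((P.rnDeriv M x).toReal) ∂P

/-! With `ν = P + Q` and `D = dP/dν`, the density of `Q` with respect to `ν` is `1 - D`, and
`dP/dM = 2D`, `dQ/dM = 2(1 - D)`. Hence `KL(P‖M) = log 2 + ∫ log D dP` and
`KL(Q‖M) = log 2 + ∫ log (1 - D) dQ`, so the two loss terms are `log 2 - KL(P‖M)` and
`log 2 - KL(Q‖M)`. Everything is finite because `t · (-log t) ≤ 1` on `[0, 1]`, which bounds
`∫ -log D dP = ∫ D · (-log D) dν` by `ν(Ω)`. -/

lemma negLog_of_ne_zero {x : ℝ≥0∞} (hx : x ≠ 0) :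
    negLog x = ENNReal.ofReal (-Real.log x.toReal) :=
  if_neg hx

lemma measurable_negLog : Measurable negLog :=
  Measurable.ite (measurableSet_singleton 0) measurable_const
    (ENNReal.measurable_ofReal.comp (Real.measurable_log.comp ENNReal.measurable_toReal).neg)

lemma mul_negLog_le_one {x : ℝ≥0∞} (hx : x ≤ 1) : x * negLog x ≤ 1 := by
  rcases eq_or_ne x 0 with rfl | hx0
  · simp
  have hx_top : x ≠ ∞ := ne_top_of_le_ne_top one_ne_top hx
  have h : x.toReal * -Real.log x.toReal ≤ 1 := by
    have := Real.negMulLog_le_one_sub_self (x := x.toReal) toReal_nonneg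
    rw [Real.negMulLog] at this
    linarith [toReal_nonneg (a := x)]
  rw [negLog_of_ne_zero hx0, ← ofReal_toReal hx_top, ← ofReal_mul toReal_nonneg,
    toReal_ofReal toReal_nonneg]
  exact ofReal_le_one.mpr h

section LogIntegrals

variable {Ω : Type*} [MeasurableSpace Ω] {μ : Measure Ω} {f : Ω → ℝ≥0∞}

lemma ae_negLog_eq_ofReal (hf : ∀ᵐ x ∂μ, 0 < f x) :
    ∀ᵐ x ∂μ, negLog (f x) = ENNReal.ofReal (-Real.log (f x).toReal) := by
  filter_upwards [hf] with x hx using negLog_of_ne_zero hx.ne'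

lemma ae_neg_log_toReal_nonneg (hf : ∀ᵐ x ∂μ, f x ≤ 1) :
    ∀ᵐ x ∂μ, 0 ≤ -Real.log (f x).toReal := by
  filter_upwards [hf] with x hx
  exact neg_nonneg.mpr (Real.log_nonpos toReal_nonneg (toReal_le_of_le_ofReal zero_le_one
    (by rwa [ofReal_one])))

lemma integrable_log_toReal_of_lintegral_negLog_ne_top (hf : Measurable f)
    (hf_pos : ∀ᵐ x ∂μ, 0 < f x) (hf_le : ∀ᵐ x ∂μ, f x ≤ 1)
    (hfin : ∫⁻ x, negLog (f x) ∂μ ≠ ∞) :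
    Integrable (fun x => Real.log (f x).toReal) μ := by
  rw [lintegral_congr_ae (ae_negLog_eq_ofReal hf_pos),
    lintegral_ofReal_ne_top_iff_integrable (f := fun x => -Real.log (f x).toReal)
      hf.ennreal_toReal.log.neg.aestronglyMeasurable
      (ae_neg_log_toReal_nonneg hf_le)] at hfin
  simpa using hfin.neg

lemma lintegral_negLog_eq_ofReal_neg_integral (hf_pos : ∀ᵐ x ∂μ, 0 < f x)
    (hf_le : ∀ᵐ x ∂μ, f x ≤ 1) (hint : Integrable (fun x => Real.log (f x).toReal) μ) :
    ∫⁻ x, negLog (f x) ∂μ = ENNReal.ofReal (-∫ x, Real.log (f x).toReal ∂μ) := by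
  rw [← integral_neg, ofReal_integral_eq_lintegral_ofReal
    (f := fun x => -Real.log (f x).toReal) hint.neg (ae_neg_log_toReal_nonneg hf_le)]
  exact lintegral_congr_ae (ae_negLog_eq_ofReal hf_pos)

end LogIntegrals

section DensityBoundedByOne

variable {Ω : Type*} [MeasurableSpace Ω] {μ ν : Measure Ω} [IsFiniteMeasure ν]

lemma ae_rnDeriv_le_one_of_le (h : μ ≤ ν) : ∀ᵐ x ∂μ, μ.rnDeriv ν x ≤ 1 :=
  (Measure.absolutelyContinuous_of_le h).ae_le (Measure.rnDeriv_le_one_of_le h)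

lemma lintegral_negLog_rnDeriv_ne_top_of_le [IsFiniteMeasure μ] (h : μ ≤ ν) :
    ∫⁻ x, negLog (μ.rnDeriv ν x) ∂μ ≠ ∞ := by
  rw [← lintegral_rnDeriv_mul (f := fun x => negLog (μ.rnDeriv ν x))
    (Measure.absolutelyContinuous_of_le h)
    (measurable_negLog.comp (μ.measurable_rnDeriv ν)).aemeasurable]
  refine ne_top_of_le_ne_top (measure_ne_top ν Set.univ) ?_
  rw [← lintegral_one]
  refine lintegral_mono_ae ?_
  filter_upwards [Measure.rnDeriv_le_one_of_le h] with x hx using mul_negLog_le_one hx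

lemma integrable_log_rnDeriv_of_le [IsFiniteMeasure μ] (h : μ ≤ ν) :
    Integrable (fun x => Real.log (μ.rnDeriv ν x).toReal) μ :=
  integrable_log_toReal_of_lintegral_negLog_ne_top (μ.measurable_rnDeriv ν)
    (Measure.rnDeriv_pos (Measure.absolutelyContinuous_of_le h)) (ae_rnDeriv_le_one_of_le h)
    (lintegral_negLog_rnDeriv_ne_top_of_le h)

lemma klReal_smul_inv_two_eq_of_le [IsProbabilityMeasure μ] (h : μ ≤ ν) :
    klReal μ ((2 : ℝ≥0∞)⁻¹ • ν) = Real.log 2 + ∫ x, Real.log (μ.rnDeriv ν x).toReal ∂μ := by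
  have hμν := Measure.absolutelyContinuous_of_le h
  have h_log : ∀ᵐ x ∂μ, Real.log (μ.rnDeriv ((2 : ℝ≥0∞)⁻¹ • ν) x).toReal
      = Real.log 2 + Real.log (μ.rnDeriv ν x).toReal := by
    filter_upwards [hμν.ae_le (Measure.rnDeriv_smul_right_of_ne_top μ ν (r := (2 : ℝ≥0∞)⁻¹)
      (by simp) (by simp)), Measure.rnDeriv_pos hμν, ae_rnDeriv_le_one_of_le h]
      with x hx hpos hle
    have hx_top : μ.rnDeriv ν x ≠ ∞ := ne_top_of_le_ne_top one_ne_top hle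
    rw [hx, Pi.smul_apply, inv_inv, smul_eq_mul, toReal_mul, toReal_ofNat,
      Real.log_mul two_ne_zero (toReal_pos hpos.ne' hx_top).ne']
  rw [klReal, integral_congr_ae h_log, integral_add (integrable_const _)
    (integrable_log_rnDeriv_of_le h), integral_const, probReal_univ, one_smul]

lemma klReal_smul_inv_two_le_log_two [IsProbabilityMeasure μ] (h : μ ≤ ν) :
    klReal μ ((2 : ℝ≥0∞)⁻¹ • ν) ≤ Real.log 2 := by
  rw [klReal_smul_inv_two_eq_of_le h, add_le_iff_nonpos_right, ← neg_nonneg, ← integral_neg]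
  exact integral_nonneg_of_ae (ae_neg_log_toReal_nonneg (ae_rnDeriv_le_one_of_le h))

lemma lintegral_negLog_rnDeriv_eq_of_le [IsProbabilityMeasure μ] (h : μ ≤ ν) :
    ∫⁻ x, negLog (μ.rnDeriv ν x) ∂μ
      = ENNReal.ofReal (Real.log 2 - klReal μ ((2 : ℝ≥0∞)⁻¹ • ν)) := by
  rw [lintegral_negLog_eq_ofReal_neg_integral
    (Measure.rnDeriv_pos (Measure.absolutelyContinuous_of_le h)) (ae_rnDeriv_le_one_of_le h)
    (integrable_log_rnDeriv_of_le h), klReal_smul_inv_two_eq_of_le h]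
  ring_nf

end DensityBoundedByOne

lemma rnDeriv_add_right_ae_eq_one_sub {Ω : Type*} [MeasurableSpace Ω] (μ ν : Measure Ω)
    [IsFiniteMeasure μ] [IsFiniteMeasure ν] :
    ν.rnDeriv (μ + ν) =ᵐ[μ + ν] 1 - μ.rnDeriv (μ + ν) := by
  filter_upwards [μ.rnDeriv_add' ν (μ + ν), (μ + ν).rnDeriv_self, μ.rnDeriv_lt_top (μ + ν)]
    with x h_add h_self h_top
  rw [h_self, Pi.add_apply] at h_add
  rw [Pi.sub_apply, Pi.one_apply, h_add, ENNReal.add_sub_cancel_left h_top.ne]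

theorem lintegral_negLog_rnDeriv_add_eq_log_four_sub {Ω : Type*} [MeasurableSpace Ω]
    (P Q : Measure Ω) [IsProbabilityMeasure P] [IsProbabilityMeasure Q] :
    ∫⁻ x, negLog (P.rnDeriv (P + Q) x) ∂P + ∫⁻ x, negLog (1 - P.rnDeriv (P + Q) x) ∂Q
      = ENNReal.ofReal (Real.log 4 - 2 * ((1 / 2) * klReal P ((2 : ℝ≥0∞)⁻¹ • (P + Q))
          + (1 / 2) * klReal Q ((2 : ℝ≥0∞)⁻¹ • (P + Q)))) := by
  have hP : P ≤ P + Q := Measure.le_add_right le_rfl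
  have hQ : Q ≤ P + Q := Measure.le_add_left le_rfl
  have hQ_density : ∫⁻ x, negLog (1 - P.rnDeriv (P + Q) x) ∂Q
      = ∫⁻ x, negLog (Q.rnDeriv (P + Q) x) ∂Q := by
    refine lintegral_congr_ae ?_
    filter_upwards [(Measure.absolutelyContinuous_of_le hQ).ae_le
      (rnDeriv_add_right_ae_eq_one_sub P Q)] with x hx
    rw [hx, Pi.sub_apply, Pi.one_apply]
  have h_log_four : Real.log 4 = 2 * Real.log 2 := by
    rw [show (4 : ℝ) = 2 ^ 2 by norm_num, Real.log_pow, Nat.cast_ofNat]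
  rw [hQ_density, lintegral_negLog_rnDeriv_eq_of_le hP, lintegral_negLog_rnDeriv_eq_of_le hQ,
    ← ofReal_add (sub_nonneg.2 (klReal_smul_inv_two_le_log_two hP))
      (sub_nonneg.2 (klReal_smul_inv_two_le_log_two hQ)), h_log_four]
  ring_nf

/-- Proposition 2 (adversarial Z loss value): with `P` the law of `(G(Z), Z)` and `Q` the
law of `(G(Z), E(G(Z)))` for `Z ∼ μ`, and `D* = dP/d(P+Q)`, the loss at the optimal
discriminator equals `log 4 - 2·D_JS(P‖Q)`, where
`D_JS(P‖Q) = (1/2) KL(P‖M) + (1/2) KL(Q‖M)` with `M = (1/2)(P+Q)`. -/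
theorem adversarial_Z_optimal_loss_value
    (dZ dX : ℕ) (μ : Measure (EuclideanSpace ℝ (Fin dZ))) [IsProbabilityMeasure μ]
    (G : EuclideanSpace ℝ (Fin dZ) → EuclideanSpace ℝ (Fin dX))
    (E : EuclideanSpace ℝ (Fin dX) → EuclideanSpace ℝ (Fin dZ))
    (hG : Measurable G) (hE : Measurable E)
    (P Q : Measure (EuclideanSpace ℝ (Fin dX) × EuclideanSpace ℝ (Fin dZ)))
    (hP : P = μ.map (fun z => (G z, z)))
    (hQ : Q = μ.map (fun z => (G z, E (G z))))
    (M : Measure (EuclideanSpace ℝ (Fin dX) × EuclideanSpace ℝ (Fin dZ)))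
    (hM : M = (2 : ℝ≥0∞)⁻¹ • (P + Q)) :
    ∫⁻ x, negLog (P.rnDeriv (P + Q) x) ∂P
        + ∫⁻ x, negLog (1 - P.rnDeriv (P + Q) x) ∂Q
      = ENNReal.ofReal
          (Real.log 4 - 2 * ((1 / 2) * klReal P M + (1 / 2) * klReal Q M)) := by
  have : IsProbabilityMeasure P :=
    hP ▸ Measure.isProbabilityMeasure_map (hG.prodMk measurable_id).aemeasurable
  have : IsProbabilityMeasure Q :=
    hQ ▸ Measure.isProbabilityMeasure_map (hG.prodMk (hE.comp hG)).aemeasurable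
  subst hM
  exact lintegral_negLog_rnDeriv_add_eq_log_four_sub P Q
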